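/- arXiv:math/9502208 — 2 statements merged into one kernel-verified Lean document; each statement's English description precedes it below -/
import Mathlib

section
/- In the Lie algebra g₇, an element U satisfies dim(ad(U)(g₇)) < 3 (that is, the image of the adjoint map ad(U) : g₇ → g₇ has dimension at most 2) if and only if U ∈ span{X₂, Y₁, Z₁, Z₂, W}. -/
/-! The adjoint image of `U` lies in `span {Z₁, Z₂, W}`, and its `Z₂`-component is
`U₀ v₃ - U₃ v₀`, so `ad U` has rank at most 2 when `U₀ = U₃ = 0` (the image is then in
`span {Z₁, W}`). Conversely, if `U₀ ≠ 0` the images of `Y₁, Y₂, Z₁` have a triangular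
`(Z₁, Z₂, W)`-coordinate matrix with determinant `U₀³`, and if `U₀ = 0 ≠ U₃` those of
`X₁, X₂, Y₁` give determinant `U₃³`; either way the rank is 3. -/

noncomputable section

def br7 (u v : Fin 7 → ℝ) : Fin 7 → ℝ :=
  ![0, 0, 0, 0,
    u 0 * v 2 - u 2 * v 0 + (u 1 * v 3 - u 3 * v 1),
    u 0 * v 3 - u 3 * v 0,
    u 0 * v 4 - u 4 * v 0 + (u 1 * v 5 - u 5 * v 1) + (u 2 * v 3 - u 3 * v 2)]

def X2 : Fin 7 → ℝ := Pi.single 1 1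
def Y1 : Fin 7 → ℝ := Pi.single 2 1
def Z1 : Fin 7 → ℝ := Pi.single 4 1
def Z2 : Fin 7 → ℝ := Pi.single 5 1
def Wv : Fin 7 → ℝ := Pi.single 6 1

open Module Submodule

theorem card_le_finrank_span_range_of_linearIndependent {K V W : Type*} [DivisionRing K]
    [AddCommGroup W] [Module K W] [FiniteDimensional K W]
    (f : V → W) {n : ℕ} (v : Fin n → V) (hv : LinearIndependent K (f ∘ v)) :
    n ≤ finrank K (span K (Set.range f)) :=
  calc n = finrank K (span K (Set.range (f ∘ v))) := by
        rw [finrank_span_eq_card hv, Fintype.card_fin]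
    _ ≤ _ := finrank_mono (span_mono (Set.range_comp_subset_range v f))

theorem linearIndependent_of_det_ne_zero {K m n : Type*} [Field K] [Fintype n] [DecidableEq n]
    (v : n → m → K) (c : n → m) (h : (Matrix.of fun i j ↦ v i (c j)).det ≠ 0) :
    LinearIndependent K v :=
  .of_comp (LinearMap.funLeft K K c) (Matrix.linearIndependent_rows_of_det_ne_zero h)

theorem mem_span_X2_Y1_Z1_Z2_Wv_iff (U : Fin 7 → ℝ) :
    U ∈ span ℝ {X2, Y1, Z1, Z2, Wv} ↔ U 0 = 0 ∧ U 3 = 0 := by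
  constructor
  · intro hU
    have hle : span ℝ {X2, Y1, Z1, Z2, Wv} ≤
        LinearMap.ker (LinearMap.proj 0) ⊓ LinearMap.ker (LinearMap.proj 3) := by
      rw [span_le]
      simp [Set.insert_subset_iff, X2, Y1, Z1, Z2, Wv]
    simpa using hle hU
  · rintro ⟨h0, h3⟩
    have hU : U = U 1 • X2 + U 2 • Y1 + U 4 • Z1 + U 5 • Z2 + U 6 • Wv := by
      funext i
      fin_cases i <;> simp [X2, Y1, Z1, Z2, Wv, h0, h3]
    rw [hU]
    refine add_mem (add_mem (add_mem (add_mem ?_ ?_) ?_) ?_) ?_ <;>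
      exact smul_mem _ _ (subset_span (by simp))

theorem finrank_span_range_br7_le_two {U : Fin 7 → ℝ} (h0 : U 0 = 0) (h3 : U 3 = 0) :
    finrank ℝ (span ℝ (Set.range (br7 U))) ≤ 2 := by
  have hle : span ℝ (Set.range (br7 U)) ≤ span ℝ (Set.range ![Z1, Wv]) := by
    rw [span_le]
    rintro _ ⟨v, rfl⟩
    have hv : br7 U v = br7 U v 4 • Z1 + br7 U v 6 • Wv := by
      funext i
      fin_cases i <;> simp [br7, Z1, Wv, h0, h3]
    rw [hv]
    exact add_mem (smul_mem _ _ (subset_span ⟨0, rfl⟩)) (smul_mem _ _ (subset_span ⟨1, rfl⟩))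
  exact (finrank_mono hle).trans (finrank_range_le_card _)

theorem three_le_finrank_span_range_br7_of_ne_zero {U : Fin 7 → ℝ} (h0 : U 0 ≠ 0) :
    3 ≤ finrank ℝ (span ℝ (Set.range (br7 U))) := by
  let v : Fin 3 → Fin 7 → ℝ := ![Pi.single 2 1, Pi.single 3 1, Pi.single 4 1]
  have hdet : (Matrix.of fun i j ↦ br7 U (v i) (![4, 5, 6] j)).det = U 0 ^ 3 := by
    simp [v, Matrix.det_fin_three, br7]
    ring
  refine card_le_finrank_span_range_of_linearIndependent _ v
    (linearIndependent_of_det_ne_zero _ ![4, 5, 6] ?_)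
  simpa [hdet] using pow_ne_zero 3 h0

theorem three_le_finrank_span_range_br7_of_apply_three_ne_zero {U : Fin 7 → ℝ} (h0 : U 0 = 0)
    (h3 : U 3 ≠ 0) : 3 ≤ finrank ℝ (span ℝ (Set.range (br7 U))) := by
  let v : Fin 3 → Fin 7 → ℝ := ![Pi.single 0 1, Pi.single 1 1, Pi.single 2 1]
  have hdet : (Matrix.of fun i j ↦ br7 U (v i) (![4, 5, 6] j)).det = U 3 ^ 3 := by
    simp [v, Matrix.det_fin_three, br7, h0]
    ring
  refine card_le_finrank_span_range_of_linearIndependent _ v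
    (linearIndependent_of_det_ne_zero _ ![4, 5, 6] ?_)
  simpa [hdet] using pow_ne_zero 3 h3

/-- In g₇: the image of ad(U) has dimension < 3 if and only if
U ∈ span{X₂, Y₁, Z₁, Z₂, W}. -/
theorem stmt10 (U : Fin 7 → ℝ) :
    Module.finrank ℝ ↥(Submodule.span ℝ (Set.range (br7 U))) < 3 ↔
      U ∈ Submodule.span ℝ {X2, Y1, Z1, Z2, Wv} := by
  rw [mem_span_X2_Y1_Z1_Z2_Wv_iff]
  constructor
  · intro hlt
    by_contra hU
    rcases eq_or_ne (U 0) 0 with h0 | h0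
    · exact hlt.not_ge (three_le_finrank_span_range_br7_of_apply_three_ne_zero h0 (hU ⟨h0, ·⟩))
    · exact hlt.not_ge (three_le_finrank_span_range_br7_of_ne_zero h0)
  · rintro ⟨h0, h3⟩
    exact (finrank_span_range_br7_le_two h0 h3).trans_lt (by norm_num)
end
end

section
/- There is no Lie algebra automorphism Ψ of g₇ satisfying all of: Ψ(W) = εW for some ε ∈ {1, −1}; Ψ(Y₁) ∈ 2ε₁Y₁ + span{Z₁, Z₂, W} for some ε₁ ∈ {1, −1}; and Ψ(Y₂) ∈ 2ε₂Y₂ + span{Y₁, Z₁, Z₂, W} for some ε₂ ∈ {1, −1}. -/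
noncomputable section

def Y2 : Fin 7 → ℝ := Pi.single 3 1
/-! Since `[Y₁, Y₂] = W` and the prescribed corrections of `Ψ Y₁`, `Ψ Y₂` bracket trivially with
the leading terms and with each other, `ε W = Ψ W = [Ψ Y₁, Ψ Y₂] = 4 ε₁ ε₂ W`, while `±1 ≠ ±4`. -/

open Submodule

lemma br7_Y1_Y2 : br7 Y1 Y2 = Wv := by
  funext i
  fin_cases i <;> simp [br7, Y1, Y2, Wv]

lemma br7_eq_smul_Wv {u v : Fin 7 → ℝ} {a b : ℝ}
    (hu : u - a • Y1 ∈ span ℝ {Z1, Z2, Wv}) (hv : v - b • Y2 ∈ span ℝ {Y1, Z1, Z2, Wv}) :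
    br7 u v = (a * b) • Wv := by
  obtain ⟨c₁, c₂, c₃, hc⟩ := mem_span_triple.mp hu
  obtain ⟨d₀, w, hw, hd⟩ := mem_span_insert.mp hv
  obtain ⟨d₁, d₂, d₃, rfl⟩ := mem_span_triple.mp hw
  rw [eq_sub_iff_add_eq] at hc
  rw [sub_eq_iff_eq_add] at hd
  subst hc hd
  funext i
  fin_cases i <;> simp [br7, Y1, Y2, Z1, Z2, Wv]

/-- There is no Lie algebra automorphism Ψ of g₇ with Ψ(W) = ±W,
Ψ(Y₁) ∈ ±2Y₁ + span{Z₁,Z₂,W}, and Ψ(Y₂) ∈ ±2Y₂ + span{Y₁,Z₁,Z₂,W}. -/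
theorem stmt11 :
    ¬ ∃ (Ψ : (Fin 7 → ℝ) → (Fin 7 → ℝ)) (ε ε₁ ε₂ : ℝ),
      IsLinearMap ℝ Ψ ∧ Function.Bijective Ψ ∧
      (∀ u v, Ψ (br7 u v) = br7 (Ψ u) (Ψ v)) ∧
      (ε = 1 ∨ ε = -1) ∧ (ε₁ = 1 ∨ ε₁ = -1) ∧ (ε₂ = 1 ∨ ε₂ = -1) ∧
      Ψ Wv = ε • Wv ∧
      Ψ Y1 - (2 * ε₁) • Y1 ∈ Submodule.span ℝ {Z1, Z2, Wv} ∧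
      Ψ Y2 - (2 * ε₂) • Y2 ∈ Submodule.span ℝ {Y1, Z1, Z2, Wv} := by
  rintro ⟨Ψ, ε, ε₁, ε₂, -, -, hbr, hε, hε₁, hε₂, hW, h₁, h₂⟩
  have hΨW : ε • Wv = (2 * ε₁ * (2 * ε₂)) • Wv := by
    rw [← hW, ← br7_eq_smul_Wv h₁ h₂, ← hbr, br7_Y1_Y2]
  have hε_eq : ε = 4 * ε₁ * ε₂ := by
    have h6 := congrFun hΨW 6
    simp only [Wv, Pi.smul_apply, Pi.single_eq_same, smul_eq_mul, mul_one] at h6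
    linarith
  rcases hε with rfl | rfl <;> rcases hε₁ with rfl | rfl <;> rcases hε₂ with rfl | rfl <;>
    norm_num at hε_eq
end
end
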